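/- If (T_x(X), T_y(Y)) is globally sufficient for θ (θ–(T_x(X),T_y(Y))–(X,Y) is a Markov chain), then T_x(X) is conditionally sufficient for θ given Y, i.e., θ–(T_x(X),Y)–X is a Markov chain. -/

import Mathlib

open scoped Classical BigOperators

/-- Probability of a set of outcomes under a pmf `p` on a finite sample space. -/
noncomputable def pr {Ω : Type*} [Fintype Ω] (p : Ω → ℝ) (s : Set Ω) : ℝ :=
  ∑ ω, if ω ∈ s then p ω else 0

/-- `p` is a probability mass function on the finite sample space `Ω`. -/
def IsPMF {Ω : Type*} [Fintype Ω] (p : Ω → ℝ) : Prop :=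
  (∀ ω, 0 ≤ p ω) ∧ (∑ ω, p ω) = 1

/-- The Markov chain `A – B – C`: `A` and `C` are conditionally independent given `B`. -/
def MarkovChain {Ω α β γ : Type*} [Fintype Ω] (p : Ω → ℝ)
    (A : Ω → α) (B : Ω → β) (C : Ω → γ) : Prop :=
  ∀ (a : α) (b : β) (c : γ),
    pr p {ω | A ω = a ∧ B ω = b ∧ C ω = c} * pr p {ω | B ω = b} =
      pr p {ω | A ω = a ∧ B ω = b} * pr p {ω | B ω = b ∧ C ω = c}

/-!
Weak union of conditional independence: from `θ – (T_x(X), T_y(Y)) – (X, Y)` we get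
`θ – ((T_x(X), T_y(Y)), Y) – X`, and `((T_x(X), T_y(Y)), Y)` is an injective function of
`(T_x(X), Y)`, so conditioning on either generates the same events. Weak union itself is
checked after multiplying through by `P(B = b)`, using `A – B – D`, which follows by summing
`A – B – (C, D)` over `C`; when `P(B = b) = 0` every term vanishes.
-/

section pr

variable {Ω γ : Type*} [Fintype Ω] {p : Ω → ℝ}

lemma pr_mono (hp : ∀ ω, 0 ≤ p ω) {s t : Set Ω} (hst : s ⊆ t) : pr p s ≤ pr p t :=
  Finset.sum_le_sum fun ω _ => by
    by_cases hs : ω ∈ s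
    · simp [hs, hst hs]
    · simp only [hs, if_false]
      split_ifs <;> simp [hp ω]

lemma pr_nonneg (hp : ∀ ω, 0 ≤ p ω) (s : Set Ω) : 0 ≤ pr p s := by
  simpa [pr] using pr_mono hp (Set.empty_subset s)

lemma pr_eq_zero_of_subset (hp : ∀ ω, 0 ≤ p ω) {s t : Set Ω} (hst : s ⊆ t)
    (ht : pr p t = 0) : pr p s = 0 :=
  le_antisymm (ht ▸ pr_mono hp hst) (pr_nonneg hp s)

variable (p) in
lemma pr_eq_sum_pr_and (Q : Ω → Prop) (C : Ω → γ) :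
    pr p {ω | Q ω} = ∑ c ∈ Finset.univ.image C, pr p {ω | Q ω ∧ C ω = c} := by
  unfold pr
  rw [Finset.sum_comm]
  refine Finset.sum_congr rfl fun ω _ => ?_
  by_cases hQ : Q ω <;> simp [hQ]

end pr

namespace MarkovChain

variable {Ω α β γ δ ε : Type*} [Fintype Ω] {p : Ω → ℝ}
  {A : Ω → α} {B : Ω → β} {C : Ω → γ} {D : Ω → δ}

theorem decomposition (h : MarkovChain p A B fun ω => (C ω, D ω)) : MarkovChain p A B D := by
  intro a b d
  have hsplit (Q : Ω → Prop) : pr p {ω | Q ω ∧ D ω = d} =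
      ∑ c ∈ Finset.univ.image C, pr p {ω | Q ω ∧ (C ω, D ω) = (c, d)} := by
    rw [pr_eq_sum_pr_and p _ C]
    refine Finset.sum_congr rfl fun c _ => congrArg (pr p) ?_
    ext ω
    simp only [Set.mem_ofPred_eq, Prod.mk.injEq]
    tauto
  have hAB := hsplit fun ω => A ω = a ∧ B ω = b
  simp only [and_assoc] at hAB
  rw [hAB, hsplit, Finset.sum_mul, Finset.mul_sum]
  exact Finset.sum_congr rfl fun c _ => h a b (c, d)

theorem weak_union (hp : ∀ ω, 0 ≤ p ω) (h : MarkovChain p A B fun ω => (C ω, D ω)) :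
    MarkovChain p A (fun ω => (B ω, D ω)) C := by
  rintro a ⟨b, d⟩ c
  have hd := h.decomposition a b d
  have hcd := h a b (c, d)
  simp only [Prod.mk.injEq] at hcd ⊢
  have hA : {ω | A ω = a ∧ (B ω = b ∧ D ω = d) ∧ C ω = c} =
      {ω | A ω = a ∧ B ω = b ∧ C ω = c ∧ D ω = d} := by
    ext; simp only [Set.mem_ofPred_eq]; tauto
  have hB : {ω | (B ω = b ∧ D ω = d) ∧ C ω = c} = {ω | B ω = b ∧ C ω = c ∧ D ω = d} := by
    ext; simp only [Set.mem_ofPred_eq]; tauto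
  rw [hA, hB]
  by_cases hb : pr p {ω | B ω = b} = 0
  · have hsub {P : Ω → Prop} : {ω | A ω = a ∧ B ω = b ∧ P ω} ⊆ {ω | B ω = b} :=
      fun ω hω => hω.2.1
    rw [pr_eq_zero_of_subset hp hsub hb, pr_eq_zero_of_subset hp hsub hb, zero_mul, zero_mul]
  · refine mul_right_cancel₀ hb ?_
    linear_combination pr p {ω | B ω = b ∧ D ω = d} * hcd -
      pr p {ω | B ω = b ∧ C ω = c ∧ D ω = d} * hd

theorem of_comp_injective {g : β → ε} (hg : Function.Injective g)
    (h : MarkovChain p A (fun ω => g (B ω)) C) : MarkovChain p A B C := by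
  intro a b c
  simpa only [hg.eq_iff] using h a (g b) c

end MarkovChain

/-- If `(T_x(X), T_y(Y))` is globally sufficient for `θ`, then `T_x(X)` is conditionally
sufficient for `θ` given `Y`, i.e. `θ – (T_x(X), Y) – X` is a Markov chain. -/
theorem global_sufficiency_implies_conditional_sufficiency
    {Ω Θ 𝒳 𝒴 T₁ T₂ : Type*} [Fintype Ω]
    (p : Ω → ℝ) (hp : IsPMF p)
    (θ : Ω → Θ) (X : Ω → 𝒳) (Y : Ω → 𝒴) (Tx : 𝒳 → T₁) (Ty : 𝒴 → T₂)
    (hglob : MarkovChain p θ (fun ω => (Tx (X ω), Ty (Y ω))) (fun ω => (X ω, Y ω))) :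
    MarkovChain p θ (fun ω => (Tx (X ω), Y ω)) X := by
  have hinj : Function.Injective fun q : T₁ × 𝒴 => ((q.1, Ty q.2), q.2) := by
    rintro ⟨t, y⟩ ⟨t', y'⟩ h
    simp_all
  exact (hglob.weak_union hp.1).of_comp_injective hinj
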